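/- Let G be a finite simple graph with clique vertex partition π and G^π the associated clique-whiskered graph. The vertex cover ideal J(G^π) has linear quotients with respect to the lexicographic order induced from the vertex order w_{11} > w_{12} > … > w_{1r_1} > v_1 > w_{21} > … > v_{t−1} > w_{t1} > … > w_{t r_t} > v_t: enumerating the minimal vertex covers C_1, …, C_r of G^π so that X_{C_1} > X_{C_2} > … > X_{C_r} in this lexicographic order, for each j ∈ [r−1] the colon ideal ⟨X_{C_1}, …, X_{C_j}⟩ : X_{C_{j+1}} is generated by a set of variables. -/

import Mathlib

/-!
A minimal vertex cover of `G^π` contains the whisker `v_i` exactly when it misses some vertex of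
the clique `A_i`. If `X_D > X_C` for minimal covers `C`, `D`, the largest variable `z` of `D \ C`
cannot be a whisker `v_i`: `D` misses some `w ∈ A_i`, which is bigger than `v_i`, so `C` misses
`w` as well and must contain `v_i`. Hence `z ∈ A_i`, and `C' = C ∪ {z} \ {v_i}` is again a minimal
cover with `X_{C'} > X_C` and `C' \ C = {z}`. Since the colon ideal `⟨X_D⟩ : X_C` of a squarefree
monomial ideal is generated by the `X_{D \ C}`, each of which is divisible by such an `x_z`, it
is generated by variables.
-/

open scoped Classical

namespace PaperHS

/-- A set of vertices is a vertex cover of a simple graph if it meets every edge. -/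
def IsVertexCover {U : Type*} (H : SimpleGraph U) (C : Set U) : Prop :=
  ∀ ⦃a b : U⦄, H.Adj a b → a ∈ C ∨ b ∈ C

/-- A vertex cover is minimal if no proper subset is a vertex cover. -/
def IsMinVertexCover {U : Type*} (H : SimpleGraph U) (C : Set U) : Prop :=
  IsVertexCover H C ∧ ∀ D : Set U, D ⊂ C → ¬ IsVertexCover H D

/-- The clique-whiskered graph `G^π`. -/
def cliqueWhisker {V ι : Type*} (G : SimpleGraph V) (A : ι → Set V) :
    SimpleGraph (V ⊕ ι) :=
  SimpleGraph.fromRel (fun x y =>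
    match x, y with
    | Sum.inl a, Sum.inl b => G.Adj a b
    | Sum.inl a, Sum.inr i => a ∈ A i
    | _, _ => False)

/-- `lexGT lt C D` says the squarefree monomial `X_C` is strictly greater than
`X_D` in the lexicographic order induced by the variable order in which `x` is a
bigger variable than `y` whenever `lt y x`:  at the biggest variable `z` where
`C` and `D` differ, `z` belongs to `C`. -/
def lexGT {U : Type*} (lt : U → U → Prop) (C D : Finset U) : Prop :=
  ∃ z ∈ C, z ∉ D ∧ ∀ y : U, lt z y → (y ∈ C ↔ y ∈ D)

theorem isMinVertexCover_iff {U : Type*} {H : SimpleGraph U} {C : Set U} :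
    IsMinVertexCover H C ↔ IsVertexCover H C ∧ ∀ x ∈ C, ∃ y, H.Adj x y ∧ y ∉ C := by
  refine ⟨fun ⟨hcov, hmin⟩ => ⟨hcov, fun x hx => ?_⟩, fun ⟨hcov, hpriv⟩ => ⟨hcov, ?_⟩⟩
  · have hnot := hmin (C \ {x}) (Set.sdiff_singleton_ssubset.mpr hx)
    simp only [IsVertexCover, Set.mem_sdiff, Set.mem_singleton_iff, not_forall] at hnot
    obtain ⟨a, b, hab, hnab⟩ := hnot
    rcases hcov hab with ha | hb
    · obtain rfl : a = x := by tauto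
      exact ⟨b, hab, fun hb => hnab (Or.inr ⟨hb, (hab.ne ·.symm)⟩)⟩
    · obtain rfl : b = x := by tauto
      exact ⟨a, hab.symm, fun ha => hnab (Or.inl ⟨ha, hab.ne⟩)⟩
  · intro D hDC hD
    obtain ⟨x, hxC, hxD⟩ := Set.exists_of_ssubset hDC
    obtain ⟨y, hxy, hyC⟩ := hpriv x hxC
    exact (hD hxy).elim hxD fun hyD => hyC (hDC.subset hyD)

theorem lexGT_insert_erase {U : Type*} [DecidableEq U] {lt : U → U → Prop} [Std.Asymm lt]
    {C : Finset U} {z w : U} (hzC : z ∉ C) (hwz : lt w z) : lexGT lt (insert z (C.erase w)) C := by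
  refine ⟨z, Finset.mem_insert_self _ _, hzC, fun y hzy => ?_⟩
  have hyz : y ≠ z := by rintro rfl; exact asymm hzy hzy
  have hyw : y ≠ w := by rintro rfl; exact asymm hwz hzy
  simp [hyz, hyw]

section CliqueWhisker

open Sum

variable {V ι : Type*} {G : SimpleGraph V} {A : ι → Set V}

@[simp]
theorem cliqueWhisker_adj_inl_inl {a b : V} :
    (cliqueWhisker G A).Adj (inl a) (inl b) ↔ G.Adj a b := by
  simp only [cliqueWhisker, SimpleGraph.fromRel_adj, ne_eq, inl.injEq]
  exact ⟨fun ⟨_, h⟩ => h.elim id SimpleGraph.Adj.symm, fun h => ⟨h.ne, Or.inl h⟩⟩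

@[simp]
theorem cliqueWhisker_adj_inl_inr {a : V} {i : ι} :
    (cliqueWhisker G A).Adj (inl a) (inr i) ↔ a ∈ A i := by
  simp [cliqueWhisker]

@[simp]
theorem cliqueWhisker_adj_inr_inl {a : V} {i : ι} :
    (cliqueWhisker G A).Adj (inr i) (inl a) ↔ a ∈ A i := by
  simp [cliqueWhisker]

@[simp]
theorem cliqueWhisker_not_adj_inr_inr {i j : ι} : ¬ (cliqueWhisker G A).Adj (inr i) (inr j) := by
  simp [cliqueWhisker]

theorem isVertexCover_cliqueWhisker_iff {C : Set (V ⊕ ι)} :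
    IsVertexCover (cliqueWhisker G A) C ↔
      (∀ a b, G.Adj a b → inl a ∈ C ∨ inl b ∈ C) ∧ ∀ i, ∀ a ∈ A i, inl a ∈ C ∨ inr i ∈ C := by
  refine ⟨fun h => ⟨fun a b hab => h (by simpa using hab), fun i a ha => h (by simpa using ha)⟩,
    fun ⟨hG, hA⟩ => ?_⟩
  rintro (a | i) (b | j) hab <;> simp only [cliqueWhisker_adj_inl_inl, cliqueWhisker_adj_inl_inr,
    cliqueWhisker_adj_inr_inl, cliqueWhisker_not_adj_inr_inr] at hab
  · exact hG a b hab
  · exact hA j a hab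
  · exact (hA i b hab).symm

theorem isMinVertexCover_cliqueWhisker_iff (hA : ∀ a : V, ∃ i, a ∈ A i)
    (hclique : ∀ i, G.IsClique (A i)) {C : Set (V ⊕ ι)} :
    IsMinVertexCover (cliqueWhisker G A) C ↔
      (∀ a b, G.Adj a b → inl a ∈ C ∨ inl b ∈ C) ∧ ∀ i, (inr i ∈ C ↔ ∃ a ∈ A i, inl a ∉ C) := by
  rw [isMinVertexCover_iff, isVertexCover_cliqueWhisker_iff]
  constructor
  · rintro ⟨⟨hG, hblock⟩, hpriv⟩
    refine ⟨hG, fun i => ⟨fun hi => ?_, fun ⟨a, ha, haC⟩ => (hblock i a ha).resolve_left haC⟩⟩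
    obtain ⟨a | j, hadj, hC⟩ := hpriv _ hi
    · exact ⟨a, by simpa using hadj, hC⟩
    · exact (cliqueWhisker_not_adj_inr_inr hadj).elim
  · rintro ⟨hG, hwhisker⟩
    refine ⟨⟨hG, fun i a ha => or_iff_not_imp_left.mpr fun haC => (hwhisker i).2 ⟨a, ha, haC⟩⟩,
      ?_⟩
    rintro (a | i) hx
    · obtain ⟨i, hai⟩ := hA a
      by_cases hi : inr i ∈ C
      · obtain ⟨b, hbi, hbC⟩ := (hwhisker i).1 hi
        have hba : a ≠ b := by rintro rfl; exact hbC hx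
        exact ⟨inl b, by simpa using hclique i hai hbi hba, hbC⟩
      · exact ⟨inr i, by simpa using hai, hi⟩
    · obtain ⟨a, ha, haC⟩ := (hwhisker i).1 hx
      exact ⟨inl a, by simpa using ha, haC⟩

theorem IsMinVertexCover.insert_inl_diff_inr (hA : ∀ a : V, ∃! i, a ∈ A i)
    (hclique : ∀ i, G.IsClique (A i)) {C : Set (V ⊕ ι)}
    (hC : IsMinVertexCover (cliqueWhisker G A) C) {a : V} {i : ι} (hai : a ∈ A i)
    (haC : inl a ∉ C) :
    IsMinVertexCover (cliqueWhisker G A) (insert (inl a) (C \ {inr i})) := by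
  have hA' : ∀ a : V, ∃ i, a ∈ A i := fun a => (hA a).exists
  rw [isMinVertexCover_cliqueWhisker_iff hA' hclique] at hC ⊢
  obtain ⟨hG, hwhisker⟩ := hC
  simp only [Set.mem_insert_iff, Set.mem_sdiff, Set.mem_singleton_iff, inl.injEq, reduceCtorEq,
    false_or, inr.injEq, not_or, not_and, not_not]
  refine ⟨fun b c hbc => ?_, fun j => ?_⟩
  · rcases hG b c hbc with h | h
    · exact Or.inl (Or.inr ⟨h, by simp⟩)
    · exact Or.inr (Or.inr ⟨h, by simp⟩)
  · rcases eq_or_ne j i with rfl | hji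
    · refine ⟨fun h => (h.2 rfl).elim, fun ⟨b, hbj, hba, hbC⟩ => ?_⟩
      rcases hG a b (hclique j hai hbj (Ne.symm hba)) with h | h
      · exact (haC h).elim
      · exact (hbC h).elim
    · have hne : ∀ b ∈ A j, b ≠ a := fun b hbj hba =>
        hji ((hA a).unique (hba ▸ hbj) hai)
      simp only [hji, not_false_eq_true, and_true, hwhisker j]
      exact ⟨fun ⟨b, hbj, hbC⟩ => ⟨b, hbj, hne b hbj, hbC⟩,
        fun ⟨b, hbj, _, hbC⟩ => ⟨b, hbj, hbC⟩⟩

theorem exists_lexGT_sdiff_eq_singleton (hA : ∀ a : V, ∃! i, a ∈ A i)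
    (hclique : ∀ i, G.IsClique (A i)) {lt : V ⊕ ι → V ⊕ ι → Prop} [Std.Asymm lt]
    (hblock : ∀ i : ι, ∀ a ∈ A i, lt (inr i) (inl a)) {C D : Finset (V ⊕ ι)}
    (hC : IsMinVertexCover (cliqueWhisker G A) ↑C) (hD : IsMinVertexCover (cliqueWhisker G A) ↑D)
    (hDC : lexGT lt D C) :
    ∃ z ∈ D \ C, ∃ D' : Finset (V ⊕ ι), IsMinVertexCover (cliqueWhisker G A) ↑D' ∧
      lexGT lt D' C ∧ D' \ C = {z} := by
  have hA' : ∀ a : V, ∃ i, a ∈ A i := fun a => (hA a).exists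
  obtain ⟨z, hzD, hzC, hagree⟩ := hDC
  rcases z with a | i
  · obtain ⟨i, hai⟩ := hA' a
    refine ⟨inl a, Finset.mem_sdiff.mpr ⟨hzD, hzC⟩, insert (inl a) (C.erase (inr i)), ?_,
      lexGT_insert_erase hzC (hblock i a hai), ?_⟩
    · rw [Finset.coe_insert, Finset.coe_erase]
      exact hC.insert_inl_diff_inr hA hclique hai hzC
    · rw [Finset.insert_sdiff_of_notMem _ hzC, Finset.sdiff_eq_empty_iff_subset.mpr
        (Finset.erase_subset _ _)]
      rfl
  · have hCw := ((isMinVertexCover_cliqueWhisker_iff hA' hclique).mp hC).2 i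
    have hDw := ((isMinVertexCover_cliqueWhisker_iff hA' hclique).mp hD).2 i
    obtain ⟨b, hbi, hbD⟩ := hDw.mp hzD
    exact absurd (hCw.mpr ⟨b, hbi, fun hbC => hbD ((hagree _ (hblock i b hbi)).mpr hbC)⟩) hzC

end CliqueWhisker

section MonomialIdeal

open MvPolynomial

variable {σ R : Type*} [CommSemiring R]

theorem prod_X_eq_monomial_indicator (D : Finset σ) :
    ∏ x ∈ D, (X x : MvPolynomial σ R) = monomial (Finsupp.indicator D fun _ _ => 1) 1 := by
  simpa using prod_X_pow (R := R) (fun _ => 1) D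

theorem indicator_le_add_indicator_iff [DecidableEq σ] {D C : Finset σ} {m : σ →₀ ℕ} :
    Finsupp.indicator D (fun _ _ => 1) ≤ m + Finsupp.indicator C (fun _ _ => 1) ↔
      Finsupp.indicator (D \ C) (fun _ _ => 1) ≤ m := by
  simp only [Finsupp.le_def, Finsupp.add_apply, Finsupp.indicator_apply, Finset.mem_sdiff]
  refine forall_congr' fun s => ?_
  by_cases hD : s ∈ D <;> by_cases hC : s ∈ C <;> simp [hD, hC]

theorem mem_span_prod_X_image {𝒟 : Set (Finset σ)} {f : MvPolynomial σ R} :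
    f ∈ Ideal.span ((fun D => ∏ x ∈ D, X x) '' 𝒟) ↔
      ∀ m ∈ f.support, ∃ D ∈ 𝒟, Finsupp.indicator D (fun _ _ => 1) ≤ m := by
  have hgens : (fun D => ∏ x ∈ D, (X x : MvPolynomial σ R)) '' 𝒟 =
      (fun e => monomial e 1) '' ((fun D => Finsupp.indicator D fun _ _ => 1) '' 𝒟) := by
    simp only [Set.image_image, prod_X_eq_monomial_indicator]
  simp only [hgens, mem_ideal_span_monomial_image, Set.exists_mem_image]

theorem support_mul_prod_X (f : MvPolynomial σ R) (C : Finset σ) :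
    (f * ∏ x ∈ C, X x).support =
      f.support.map (addRightEmbedding (Finsupp.indicator C fun _ _ => 1)) := by
  rw [prod_X_eq_monomial_indicator]
  exact AddMonoidAlgebra.support_coeff_mul_single f _ (by simp) _

theorem colon_span_prod_X_image [DecidableEq σ] (𝒟 : Set (Finset σ)) (C : Finset σ) :
    (Ideal.span ((fun D => ∏ x ∈ D, (X x : MvPolynomial σ R)) '' 𝒟)).colon
        ((Ideal.span {∏ x ∈ C, X x} : Ideal (MvPolynomial σ R)) : Set (MvPolynomial σ R)) =
      Ideal.span ((fun D => ∏ x ∈ D \ C, X x) '' 𝒟) := by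
  ext f
  rw [Ideal.mem_colon_span_singleton, mem_span_prod_X_image, support_mul_prod_X,
    ← Set.image_image (fun E => ∏ x ∈ E, X x), mem_span_prod_X_image]
  simp only [Finset.forall_mem_map, addRightEmbedding_apply, indicator_le_add_indicator_iff,
    Set.exists_mem_image]

theorem span_prod_X_image_eq_span_X_image {ℰ : Set (Finset σ)}
    (h : ∀ E ∈ ℰ, ∃ z ∈ E, {z} ∈ ℰ) :
    Ideal.span ((fun E => ∏ x ∈ E, (X x : MvPolynomial σ R)) '' ℰ) =
      Ideal.span (X '' {z | {z} ∈ ℰ}) := by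
  refine le_antisymm (Ideal.span_le.mpr ?_) (Ideal.span_le.mpr ?_)
  · rintro _ ⟨E, hE, rfl⟩
    obtain ⟨z, hzE, hz⟩ := h E hE
    dsimp only
    rw [← Finset.mul_prod_erase E _ hzE]
    exact Ideal.mul_mem_right _ _ (Ideal.subset_span ⟨z, hz, rfl⟩)
  · rintro _ ⟨z, hz, rfl⟩
    exact Ideal.subset_span ⟨{z}, hz, Finset.prod_singleton _ _⟩

end MonomialIdeal

theorem statement2_general {V ι K : Type*} [Field K]
    (G : SimpleGraph V) (A : ι → Set V)
    (hA : ∀ a : V, ∃! i, a ∈ A i)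
    (hclique : ∀ i, G.IsClique (A i))
    -- `lt` is a strict total order on the vertices of `G^π` such that, reading
    -- `lt x y` as "`y` is a bigger variable than `x`", each whisker vertex `v_i`
    -- comes right after its clique `A i`, i.e. the blocks
    -- `w_{i1} > ⋯ > w_{i r_i} > v_i` are consecutive:
    (lt : (V ⊕ ι) → (V ⊕ ι) → Prop)
    (hlt : IsStrictTotalOrder (V ⊕ ι) lt)
    (hblock : ∀ i : ι, ∀ a ∈ A i, lt (Sum.inr i) (Sum.inl a))
    -- linear quotients with respect to the induced lexicographic order:
    (C : Finset (V ⊕ ι)) (hC : IsMinVertexCover (cliqueWhisker G A) ↑C) :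
    ∃ S : Set (V ⊕ ι),
      (Ideal.span { m : MvPolynomial (V ⊕ ι) K | ∃ D : Finset (V ⊕ ι),
            IsMinVertexCover (cliqueWhisker G A) ↑D ∧ lexGT lt D C ∧
            m = ∏ x ∈ D, MvPolynomial.X x }).colon
          ((Ideal.span {∏ x ∈ C, MvPolynomial.X x} : Ideal (MvPolynomial (V ⊕ ι) K)) :
            Set (MvPolynomial (V ⊕ ι) K))
        = Ideal.span (MvPolynomial.X '' S) := by
  set 𝒟 := {D : Finset (V ⊕ ι) | IsMinVertexCover (cliqueWhisker G A) ↑D ∧ lexGT lt D C}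
  refine ⟨{z | {z} ∈ (· \ C) '' 𝒟}, ?_⟩
  have hgens : { m : MvPolynomial (V ⊕ ι) K | ∃ D : Finset (V ⊕ ι),
      IsMinVertexCover (cliqueWhisker G A) ↑D ∧ lexGT lt D C ∧ m = ∏ x ∈ D, MvPolynomial.X x } =
      (fun D => ∏ x ∈ D, MvPolynomial.X x) '' 𝒟 := by
    ext
    simp only [Set.mem_ofPred_eq, Set.mem_image, 𝒟, and_assoc, eq_comm]
  rw [hgens, colon_span_prod_X_image,
    ← Set.image_image (fun E => ∏ x ∈ E, (MvPolynomial.X x : MvPolynomial (V ⊕ ι) K))]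
  refine span_prod_X_image_eq_span_X_image (R := K) ?_
  rintro _ ⟨D, ⟨hD, hDC⟩, rfl⟩
  obtain ⟨z, hz, D', hD', hD'C, hD'sdiff⟩ :=
    exists_lexGT_sdiff_eq_singleton hA hclique hblock hC hD hDC
  exact ⟨z, hz, D', ⟨hD', hD'C⟩, hD'sdiff⟩

theorem statement2 {V ι K : Type*} [Fintype V] [Fintype ι] [Field K]
    (G : SimpleGraph V) (A : ι → Set V)
    (hA : ∀ a : V, ∃! i, a ∈ A i)
    (hclique : ∀ i, G.IsClique (A i))
    -- `lt` is a strict total order on the vertices of `G^π` such that, reading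
    -- `lt x y` as "`y` is a bigger variable than `x`", each whisker vertex `v_i`
    -- comes right after its clique `A i`, i.e. the blocks
    -- `w_{i1} > ⋯ > w_{i r_i} > v_i` are consecutive:
    (lt : (V ⊕ ι) → (V ⊕ ι) → Prop)
    (hlt : IsStrictTotalOrder (V ⊕ ι) lt)
    (hblock : ∀ i : ι, ∀ a ∈ A i, lt (Sum.inr i) (Sum.inl a))
    (hblocks1 : ∀ i j : ι, i ≠ j → ∀ a ∈ A i, ∀ b ∈ A j,
      (lt (Sum.inl a) (Sum.inl b) ↔ lt (Sum.inr i) (Sum.inr j)))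
    (hblocks2 : ∀ i j : ι, i ≠ j → ∀ a ∈ A i,
      (lt (Sum.inl a) (Sum.inr j) ↔ lt (Sum.inr i) (Sum.inr j)))
    -- linear quotients with respect to the induced lexicographic order:
    (C : Finset (V ⊕ ι)) (hC : IsMinVertexCover (cliqueWhisker G A) ↑C) :
    ∃ S : Set (V ⊕ ι),
      (Ideal.span { m : MvPolynomial (V ⊕ ι) K | ∃ D : Finset (V ⊕ ι),
            IsMinVertexCover (cliqueWhisker G A) ↑D ∧ lexGT lt D C ∧
            m = ∏ x ∈ D, MvPolynomial.X x }).colon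
          ((Ideal.span {∏ x ∈ C, MvPolynomial.X x} : Ideal (MvPolynomial (V ⊕ ι) K)) :
            Set (MvPolynomial (V ⊕ ι) K))
        = Ideal.span (MvPolynomial.X '' S) :=
  statement2_general G A hA hclique lt hlt hblock C hC

end PaperHS
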